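/- arXiv:1911.05009 — 8 statements merged into one kernel-verified Lean document; each statement's English description precedes it below -/
import Mathlib

section
/- Let g = h ⊕ a ⊕ i be equipped with the skew-symmetric bracket determined by the data (λ, μ, φ, ρ). Then this bracket satisfies the Jacobi identity (and thus makes g a Lie algebra in which a ⊕ i is an abelian ideal) if and only if for all x, y, z ∈ h: (a) φ([x,y]_h) = ρ(x)∘φ(y) − ρ(y)∘φ(x); (b) λ([x,y]_h, z) + λ([y,z]_h, x) + λ([z,x]_h, y) = 0; and (c) the cyclic sum over (x,y,z) of ρ(x)(μ(y,z)) − μ([y,z]_h, x) + φ(x)(λ(y,z)) vanishes. -/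
attribute [local instance 100] LieRing.ofAssociativeRing

/-- The skew-symmetric bracket on `h × a × i` determined by the data `(λ, μ, φ, ρ)`:
`[x+u+θ, y+v+η] = [x,y]_h + λ(x,y) + μ(x,y) + φ(x)(v) − φ(y)(u) + ρ(x)(η) − ρ(y)(θ)`. -/
def paperBracket {F : Type*} [Field F] {h a i : Type*}
    [LieRing h] [LieAlgebra F h]
    [AddCommGroup a] [Module F a] [AddCommGroup i] [Module F i]
    (lam : h → h → a) (mu : h → h → i) (phi : h →ₗ[F] a →ₗ[F] i)
    (rho : h →ₗ⁅F⁆ Module.End F i) :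
    (h × a × i) → (h × a × i) → (h × a × i) :=
  fun p q =>
    (⁅p.1, q.1⁆,
     lam p.1 q.1,
     mu p.1 q.1 + phi p.1 q.2.1 - phi q.1 p.2.1 + rho p.1 q.2.2 - rho q.1 p.2.2)

/-- the bracket determined by `(λ, μ, φ, ρ)` satisfies the Jacobi identity
(and hence makes `g = h ⊕ a ⊕ i` a Lie algebra) if and only if
(a) `φ([x,y]) = ρ(x)∘φ(y) − ρ(y)∘φ(x)`,
(b) the cyclic sum of `λ([x,y],z)` vanishes, and
(c) the cyclic sum of `ρ(x)(μ(y,z)) − μ([y,z],x) + φ(x)(λ(y,z))` vanishes. -/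
theorem stmt0 {F : Type*} [Field F] [CharZero F] {h a i : Type*}
    [LieRing h] [LieAlgebra F h] [Module.Finite F h]
    [AddCommGroup a] [Module F a] [Module.Finite F a]
    [AddCommGroup i] [Module F i] [Module.Finite F i]
    (lam : h →ₗ[F] h →ₗ[F] a) (hlam : ∀ x : h, lam x x = 0)
    (mu : h →ₗ[F] h →ₗ[F] i) (hmu : ∀ x : h, mu x x = 0)
    (phi : h →ₗ[F] a →ₗ[F] i)
    (rho : h →ₗ⁅F⁆ Module.End F i) :
    (∀ p q r : h × a × i,
        paperBracket (fun x y => lam x y) (fun x y => mu x y) phi rho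
            (paperBracket (fun x y => lam x y) (fun x y => mu x y) phi rho p q) r
          + paperBracket (fun x y => lam x y) (fun x y => mu x y) phi rho
            (paperBracket (fun x y => lam x y) (fun x y => mu x y) phi rho q r) p
          + paperBracket (fun x y => lam x y) (fun x y => mu x y) phi rho
            (paperBracket (fun x y => lam x y) (fun x y => mu x y) phi rho r p) q = 0)
    ↔ ((∀ x y : h, phi ⁅x, y⁆ = rho x ∘ₗ phi y - rho y ∘ₗ phi x)
        ∧ (∀ x y z : h, lam ⁅x, y⁆ z + lam ⁅y, z⁆ x + lam ⁅z, x⁆ y = 0)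
        ∧ (∀ x y z : h,
            (rho x (mu y z) - mu ⁅y, z⁆ x + phi x (lam y z))
          + (rho y (mu z x) - mu ⁅z, x⁆ y + phi y (lam z x))
          + (rho z (mu x y) - mu ⁅x, y⁆ z + phi z (lam x y)) = 0)) := by
  constructor
  · intro H
    refine ⟨?_, ?_, ?_⟩
    · intro x y
      ext w
      have h1 := H (x, 0, 0) (y, 0, 0) (0, w, 0)
      simp [paperBracket, Prod.ext_iff, LinearMap.sub_apply, LinearMap.comp_apply] at h1 ⊢
      linear_combination (norm := abel) h1
    · intro x y z
      have h1 := H (x, 0, 0) (y, 0, 0) (z, 0, 0)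
      simp [paperBracket, Prod.ext_iff] at h1
      linear_combination (norm := abel) h1.2.1
    · intro x y z
      have h1 := H (x, 0, 0) (y, 0, 0) (z, 0, 0)
      simp [paperBracket, Prod.ext_iff] at h1
      linear_combination (norm := module) -h1.2.2
  · rintro ⟨ha, hb, hc⟩ ⟨x, u, th⟩ ⟨y, v, et⟩ ⟨z, w, ze⟩
    simp only [paperBracket, Prod.mk_add_mk, Prod.ext_iff, Prod.fst_zero, Prod.snd_zero]
    refine ⟨?_, ?_, ?_⟩
    · linear_combination (norm := abel) -lie_jacobi x y z - lie_skew z ⁅x, y⁆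
        - lie_skew x ⁅y, z⁆ - lie_skew y ⁅z, x⁆
    · exact hb x y z
    · have ra := rho.map_lie x y
      have rb := rho.map_lie y z
      have rc := rho.map_lie z x
      rw [Ring.lie_def] at ra rb rc
      have ra' : rho ⁅x, y⁆ ze = rho x (rho y ze) - rho y (rho x ze) := by
        rw [ra]; simp [Module.End.mul_apply]
      have rb' : rho ⁅y, z⁆ th = rho y (rho z th) - rho z (rho y th) := by
        rw [rb]; simp [Module.End.mul_apply]
      have rc' : rho ⁅z, x⁆ et = rho z (rho x et) - rho x (rho z et) := by
        rw [rc]; simp [Module.End.mul_apply]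
      have pa : phi ⁅x, y⁆ w = rho x (phi y w) - rho y (phi x w) := by
        rw [ha x y]; simp [LinearMap.sub_apply]
      have pb : phi ⁅y, z⁆ u = rho y (phi z u) - rho z (phi y u) := by
        rw [ha y z]; simp [LinearMap.sub_apply]
      have pc : phi ⁅z, x⁆ v = rho z (phi x v) - rho x (phi z v) := by
        rw [ha z x]; simp [LinearMap.sub_apply]
      simp only [map_add, map_sub]
      rw [ra', rb', rc', pa, pb, pc]
      linear_combination (norm := abel) -hc x y z
end

section
/- Suppose the data (λ, μ, φ, ρ) makes the bracket on g = h ⊕ a ⊕ i satisfy the Jacobi identity. Let τ : h → a and ν : h → i be linear maps, and define λ'(x,y) = λ(x,y) + τ([x,y]_h) and μ'(x,y) = μ(x,y) − (φ(x)(τ(y)) − φ(y)(τ(x))) − (ρ(x)(ν(y)) − ρ(y)(ν(x)) − ν([x,y]_h)). Then the bracket on g defined by the data (λ', μ', φ, ρ) also satisfies the Jacobi identity, and the linear map Ψ : g → g given by Ψ(x + u + θ) = x + (u + τ(x)) + (θ + ν(x)) is a Lie algebra isomorphism from g with the bracket defined by (λ, μ, φ, ρ) onto g with the bracket defined by (λ',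 μ', φ, ρ). In particular, Lie algebras of this form whose data (λ, μ) differ by a coboundary (for the same φ and ρ) are isomorphic. -/
attribute [local instance] LieRing.ofAssociativeRing

/-- The Jacobi identity for a bracket. -/
def jacobiId {G : Type*} [AddCommGroup G] (br : G → G → G) : Prop :=
  ∀ p q r : G, br (br p q) r + br (br q r) p + br (br r p) q = 0

/-- changing `(λ, μ)` by the coboundary of `(τ, ν)` yields again a Lie algebra,
and `Ψ(x + u + θ) = x + (u + τ(x)) + (θ + ν(x))` is a Lie algebra isomorphism between the two. -/
theorem stmt3 {F : Type*} [Field F] [CharZero F] {h a i : Type*}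
    [LieRing h] [LieAlgebra F h] [Module.Finite F h]
    [AddCommGroup a] [Module F a] [Module.Finite F a]
    [AddCommGroup i] [Module F i] [Module.Finite F i]
    (lam : h →ₗ[F] h →ₗ[F] a) (hlam : ∀ x : h, lam x x = 0)
    (mu : h →ₗ[F] h →ₗ[F] i) (hmu : ∀ x : h, mu x x = 0)
    (phi : h →ₗ[F] a →ₗ[F] i)
    (rho : h →ₗ⁅F⁆ Module.End F i)
    (hJac : jacobiId (paperBracket (fun x y => lam x y) (fun x y => mu x y) phi rho))
    (τ : h →ₗ[F] a) (ν : h →ₗ[F] i) :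
    jacobiId (paperBracket
        (fun x y => lam x y + τ ⁅x, y⁆)
        (fun x y => mu x y - (phi x (τ y) - phi y (τ x))
            - (rho x (ν y) - rho y (ν x) - ν ⁅x, y⁆)) phi rho)
    ∧ (∀ p q : h × a × i,
        (fun p : h × a × i => (p.1, p.2.1 + τ p.1, p.2.2 + ν p.1))
            (paperBracket (fun x y => lam x y) (fun x y => mu x y) phi rho p q)
          = paperBracket
              (fun x y => lam x y + τ ⁅x, y⁆)
              (fun x y => mu x y - (phi x (τ y) - phi y (τ x))
                  - (rho x (ν y) - rho y (ν x) - ν ⁅x, y⁆)) phi rho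
              ((fun p : h × a × i => (p.1, p.2.1 + τ p.1, p.2.2 + ν p.1)) p)
              ((fun p : h × a × i => (p.1, p.2.1 + τ p.1, p.2.2 + ν p.1)) q))
    ∧ Function.Bijective
        (fun p : h × a × i => (p.1, p.2.1 + τ p.1, p.2.2 + ν p.1)) := by

  classical
  set Ψ : h × a × i → h × a × i := fun p => (p.1, p.2.1 + τ p.1, p.2.2 + ν p.1) with hΨ
  have hequiv : ∀ p q : h × a × i,
      Ψ (paperBracket (fun x y => lam x y) (fun x y => mu x y) phi rho p q)
        = paperBracket
            (fun x y => lam x y + τ ⁅x, y⁆)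
            (fun x y => mu x y - (phi x (τ y) - phi y (τ x))
                - (rho x (ν y) - rho y (ν x) - ν ⁅x, y⁆)) phi rho (Ψ p) (Ψ q) := by
    intro p q
    simp only [hΨ, paperBracket, Prod.mk.injEq, map_add]
    refine ⟨trivial, trivial, ?_⟩
    abel
  have hbij : Function.Bijective Ψ := by
    refine ⟨?_, ?_⟩
    · intro p q hpq
      simp only [hΨ, Prod.mk.injEq] at hpq
      obtain ⟨h1, h2, h3⟩ := hpq
      rw [h1] at h2 h3
      exact Prod.ext h1 (Prod.ext (add_right_cancel h2) (add_right_cancel h3))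
    · intro p
      exact ⟨(p.1, p.2.1 - τ p.1, p.2.2 - ν p.1), by
        simp [hΨ]⟩
  have hadd : ∀ p q : h × a × i, Ψ (p + q) = Ψ p + Ψ q := by
    intro p q
    simp [hΨ, Prod.ext_iff]
    constructor <;> abel
  refine ⟨?_, hequiv, hbij⟩
  intro p q r
  obtain ⟨p', rfl⟩ := hbij.2 p
  obtain ⟨q', rfl⟩ := hbij.2 q
  obtain ⟨r', rfl⟩ := hbij.2 r
  rw [← hequiv, ← hequiv, ← hequiv, ← hequiv, ← hequiv, ← hequiv,
    ← hadd, ← hadd, hJac p' q' r']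
  simp [hΨ]
end

section
/- Suppose φ is a 1-cocycle, i.e. φ([x,y]_h) = ρ(x)∘φ(y) − ρ(y)∘φ(x) for all x, y ∈ h. Then the degree-one map e_φ anticommutes with the differentials in degrees one and two. Explicitly: (1) for every linear map τ : h → a and all x, y, z ∈ h, e_φ(d_a τ)(x,y,z) = −(d_i(e_φ τ))(x,y,z); and (2) for every alternating bilinear map λ : h × h → a and all w, x, y, z ∈ h, e_φ(d_a λ)(w,x,y,z) = −(d_i(e_φ λ))(w,x,y,z). -/
section

variable {F : Type*} [Field F] {h a i : Type*} [LieRing h] [LieAlgebra F h]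
  [AddCommGroup a] [Module F a] [AddCommGroup i] [Module F i]

/-- `e_φ` on 1-cochains: `e_φ(τ)(x,y) = φ(x)(τ(y)) − φ(y)(τ(x))`. -/
def ePhi1 (phi : h → a → i) (τ : h → a) : h → h → i :=
  fun x y => phi x (τ y) - phi y (τ x)

/-- `e_φ` on 2-cochains: `e_φ(λ)(x,y,z) = φ(x)λ(y,z) − φ(y)λ(x,z) + φ(z)λ(x,y)`. -/
def ePhi2 (phi : h → a → i) (lam : h → h → a) : h → h → h → i :=
  fun x y z => phi x (lam y z) - phi y (lam x z) + phi z (lam x y)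

/-- `e_φ` on 3-cochains. -/
def ePhi3 (phi : h → a → i) (om : h → h → h → a) : h → h → h → h → i :=
  fun w x y z => phi w (om x y z) - phi x (om w y z) + phi y (om w x z) - phi z (om w x y)

/-- differential on 1-cochains with values in the trivial module `a`. -/
def dTriv1 (τ : h → a) : h → h → a := fun x y => -τ ⁅x, y⁆

/-- differential on 2-cochains with values in the trivial module `a`. -/
def dTriv2 (lam : h → h → a) : h → h → h → a :=
  fun x y z => -lam ⁅x, y⁆ z + lam ⁅x, z⁆ y - lam ⁅y, z⁆ x

/-- Chevalley–Eilenberg differential on 2-cochains with values in the `ρ`-module `i`. -/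
def dRho2 (rho : h → i → i) (mu : h → h → i) : h → h → h → i :=
  fun x y z => rho x (mu y z) - rho y (mu x z) + rho z (mu x y)
    - mu ⁅x, y⁆ z + mu ⁅x, z⁆ y - mu ⁅y, z⁆ x

/-- Chevalley–Eilenberg differential on 3-cochains with values in the `ρ`-module `i`. -/
def dRho3 (rho : h → i → i) (om : h → h → h → i) : h → h → h → h → i :=
  fun w x y z =>
    rho w (om x y z) - rho x (om w y z) + rho y (om w x z) - rho z (om w x y)
      - om ⁅w, x⁆ y z + om ⁅w, y⁆ x z - om ⁅w, z⁆ x y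
      - om ⁅x, y⁆ w z + om ⁅x, z⁆ w y - om ⁅y, z⁆ w x

end

attribute [local instance 100] LieRing.ofAssociativeRing

/-- when `φ` is a 1-cocycle for the tensor representation, the degree-one map
`e_φ` anticommutes with the differentials in degrees one and two. -/
theorem stmt4 {F : Type*} [Field F] [CharZero F] {h a i : Type*}
    [LieRing h] [LieAlgebra F h] [Module.Finite F h]
    [AddCommGroup a] [Module F a] [Module.Finite F a]
    [AddCommGroup i] [Module F i] [Module.Finite F i]
    (phi : h →ₗ[F] a →ₗ[F] i)
    (rho : h →ₗ⁅F⁆ Module.End F i)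
    (hcoc : ∀ x y : h, phi ⁅x, y⁆ = rho x ∘ₗ phi y - rho y ∘ₗ phi x) :
    (∀ (τ : h →ₗ[F] a) (x y z : h),
        ePhi2 (fun x v => phi x v) (dTriv1 (fun x => τ x)) x y z
          = -(dRho2 (fun x w => rho x w)
              (ePhi1 (fun x v => phi x v) (fun x => τ x)) x y z))
    ∧ (∀ (lam : h →ₗ[F] h →ₗ[F] a), (∀ x : h, lam x x = 0) → ∀ w x y z : h,
        ePhi3 (fun x v => phi x v) (dTriv2 (fun x y => lam x y)) w x y z
          = -(dRho3 (fun x u => rho x u)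
              (ePhi2 (fun x v => phi x v) (fun x y => lam x y)) w x y z)) := by
  have hcoc' : ∀ x y : h, ∀ v : a, phi ⁅x, y⁆ v = rho x (phi y v) - rho y (phi x v) := by
    intro x y v; rw [hcoc]; rfl
  constructor
  · intro τ x y z
    simp only [ePhi2, dTriv1, dRho2, ePhi1, map_neg, map_sub, hcoc']
    abel
  · intro lam halt w x y z
    simp only [ePhi3, dTriv2, dRho3, ePhi2, map_neg, map_sub, map_add, hcoc',
      LinearMap.sub_apply, LinearMap.add_apply, LinearMap.neg_apply]
    abel
end

section
/- The canonical ideal i(g) is contained in the canonical ideal j(g): Σ_{k≥1} (C_k(g) ∩ g^k) ⊆ ⋂_{k≥1} (C_k(g) + g^k). -/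
/-- The descending central series of a Lie algebra: `g^0 = g`, `g^k = [g, g^{k-1}]`
(the span of such brackets), as submodules. -/
def dcs (F : Type*) [Field F] (g : Type*) [LieRing g] [LieAlgebra F g] :
    ℕ → Submodule F g
  | 0 => ⊤
  | k + 1 => Submodule.span F {z : g | ∃ x : g, ∃ w ∈ dcs F g k, z = ⁅x, w⁆}

/-- The derived (upper) central series of a Lie algebra:
`C_0(g) = {0}`, `C_k(g) = {x : [x, g] ⊆ C_{k-1}(g)}`, as submodules. -/
def ucs (F : Type*) [Field F] (g : Type*) [LieRing g] [LieAlgebra F g] :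
    ℕ → Submodule F g
  | 0 => ⊥
  | k + 1 =>
    { carrier := {x : g | ∀ y : g, ⁅x, y⁆ ∈ ucs F g k}
      add_mem' := fun {u v} hu hv y => by
        rw [add_lie]; exact (ucs F g k).add_mem (hu y) (hv y)
      zero_mem' := fun y => by
        rw [zero_lie]; exact (ucs F g k).zero_mem
      smul_mem' := fun c u hu y => by
        rw [smul_lie]; exact (ucs F g k).smul_mem c (hu y) }

/-- The canonical ideal `i(g) = Σ_{k≥1} (C_k(g) ∩ g^k)`. -/
def iIdeal (F : Type*) [Field F] (g : Type*) [LieRing g] [LieAlgebra F g] :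
    Submodule F g :=
  ⨆ k : ℕ, ⨆ _ : 1 ≤ k, (ucs F g k ⊓ dcs F g k)

/-- The canonical ideal `j(g) = ⋂_{k≥1} (C_k(g) + g^k)`. -/
def jIdeal (F : Type*) [Field F] (g : Type*) [LieRing g] [LieAlgebra F g] :
    Submodule F g :=
  ⨅ k : ℕ, ⨅ _ : 1 ≤ k, (ucs F g k ⊔ dcs F g k)


lemma ucs_mono {F : Type*} [Field F] (g : Type*) [LieRing g] [LieAlgebra F g] :
    Monotone (ucs F g) := by
  apply monotone_nat_of_le_succ
  intro k
  induction k with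
  | zero => exact bot_le
  | succ k ih => intro x hx y; exact ih (hx y)

lemma dcs_anti {F : Type*} [Field F] (g : Type*) [LieRing g] [LieAlgebra F g] :
    Antitone (dcs F g) := by
  apply antitone_nat_of_succ_le
  intro k
  induction k with
  | zero => exact le_top
  | succ k ih =>
    apply Submodule.span_le.mpr
    rintro z ⟨x, w, hw, rfl⟩
    exact Submodule.subset_span ⟨x, w, ih hw, rfl⟩

/-- the canonical ideal `i(g)` is contained in the canonical ideal `j(g)`. -/
theorem stmt7 {F : Type*} [Field F] [CharZero F] (g : Type*) [LieRing g] [LieAlgebra F g]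
    [Module.Finite F g] :
    iIdeal F g ≤ jIdeal F g := by
  apply iSup₂_le
  intro k _
  apply le_iInf₂
  intro m _
  rcases le_total k m with h | h
  · exact le_trans (le_trans inf_le_left (ucs_mono g h)) le_sup_left
  · exact le_trans (le_trans inf_le_right (dcs_anti g h)) le_sup_right
end

section
/- Suppose g admits an invariant metric B and the canonical ideal j(g) is abelian. Then [g, j(g)] ⊆ i(g), and the orthogonal complement of i(g) with respect to B equals j(g): i(g)^⊥ = j(g). -/
section Aux

variable {F : Type*} [Field F] {g : Type*} [LieRing g] [LieAlgebra F g]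
variable (B : g →ₗ[F] g →ₗ[F] F)

lemma mem_orth (hsymm : ∀ x y : g, B x y = B y x) (W : Submodule F g) (x : g) :
    x ∈ LinearMap.BilinForm.orthogonal B W ↔ ∀ w ∈ W, B x w = 0 := by
  constructor
  · intro h w hw; rw [hsymm]; exact h w hw
  · intro h w hw; show B w x = 0; rw [hsymm]; exact h w hw

lemma orth_span (hsymm : ∀ x y : g, B x y = B y x) (S : Set g) (x : g) :
    x ∈ LinearMap.BilinForm.orthogonal B (Submodule.span F S) ↔ ∀ s ∈ S, B x s = 0 := by
  rw [mem_orth B hsymm]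
  constructor
  · intro h s hs; exact h s (Submodule.subset_span hs)
  · intro h w hw
    have hle : Submodule.span F S ≤ LinearMap.ker (B x) :=
      Submodule.span_le.2 fun s hs => by simpa using h s hs
    simpa using hle hw

lemma orth_iSup {ι : Sort*} (f : ι → Submodule F g) :
    LinearMap.BilinForm.orthogonal B (⨆ i, f i) = ⨅ i, LinearMap.BilinForm.orthogonal B (f i) := by
  ext x
  simp only [LinearMap.BilinForm.mem_orthogonal_iff, Submodule.mem_iInf]
  constructor
  · intro h i w hw; exact h w (le_iSup f i hw)
  · intro h w hw
    have hle : (⨆ i, f i) ≤ LinearMap.ker (B.flip x) :=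
      iSup_le fun i v hv => by simpa using h i v hv
    simpa [LinearMap.BilinForm.IsOrtho] using hle hw

lemma orth_sup (U V : Submodule F g) :
    LinearMap.BilinForm.orthogonal B (U ⊔ V) =
      LinearMap.BilinForm.orthogonal B U ⊓ LinearMap.BilinForm.orthogonal B V := by
  ext x
  simp only [LinearMap.BilinForm.mem_orthogonal_iff, Submodule.mem_inf]
  constructor
  · intro h
    exact ⟨fun w hw => h w (le_sup_left (a := U) hw), fun w hw => h w (le_sup_right (b := V) hw)⟩
  · rintro ⟨h1, h2⟩ w hw
    obtain ⟨u, hu, v, hv, rfl⟩ := Submodule.mem_sup.1 hw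
    show B (u + v) x = 0
    rw [map_add, LinearMap.add_apply, h1 u hu, h2 v hv, add_zero]

lemma orth_inf [Module.Finite F g] (hnd : LinearMap.BilinForm.Nondegenerate B) (hrefl : LinearMap.BilinForm.IsRefl B)
    (U V : Submodule F g) :
    LinearMap.BilinForm.orthogonal B (U ⊓ V) =
      LinearMap.BilinForm.orthogonal B U ⊔ LinearMap.BilinForm.orthogonal B V := by
  conv_lhs => rw [← LinearMap.BilinForm.orthogonal_orthogonal hnd hrefl U,
    ← LinearMap.BilinForm.orthogonal_orthogonal hnd hrefl V, ← orth_sup,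
    LinearMap.BilinForm.orthogonal_orthogonal hnd hrefl]

end Aux



section Key

variable {F : Type*} [Field F] {g : Type*} [LieRing g] [LieAlgebra F g]

lemma mem_ucs_succ (k : ℕ) (x : g) :
    x ∈ ucs F g (k + 1) ↔ ∀ y : g, ⁅x, y⁆ ∈ ucs F g k := Iff.rfl

lemma ucs_eq_orth [Module.Finite F g] (B : g →ₗ[F] g →ₗ[F] F)
    (hsymm : ∀ x y : g, B x y = B y x)
    (hnd : LinearMap.BilinForm.Nondegenerate B) (hrefl : LinearMap.BilinForm.IsRefl B)
    (hinv : ∀ x y z : g, B ⁅x, y⁆ z = B x ⁅y, z⁆) :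
    ∀ k, ucs F g k = LinearMap.BilinForm.orthogonal B (dcs F g k) := by
  intro k
  induction k with
  | zero =>
    show (⊥ : Submodule F g) = LinearMap.BilinForm.orthogonal B ⊤
    rw [LinearMap.BilinForm.orthogonal_top_eq_bot hnd]
  | succ k ih =>
    ext x
    rw [mem_ucs_succ]
    show _ ↔ x ∈ LinearMap.BilinForm.orthogonal B
      (Submodule.span F {z : g | ∃ y : g, ∃ w ∈ dcs F g k, z = ⁅y, w⁆})
    rw [orth_span B hsymm]
    constructor
    · rintro h s ⟨y, w, hw, rfl⟩
      rw [← hinv]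
      have : ⁅x, y⁆ ∈ LinearMap.BilinForm.orthogonal B (dcs F g k) := ih ▸ h y
      exact (mem_orth B hsymm _ _).1 this w hw
    · intro h y
      rw [ih, mem_orth B hsymm]
      intro w hw
      rw [hinv]
      exact h _ ⟨y, w, hw, rfl⟩

end Key

/-- if `g` admits an invariant metric `B` and `j(g)` is abelian, then
`[g, j(g)] ⊆ i(g)` and `i(g)^⊥ = j(g)`. -/
theorem stmt10 {F : Type*} [Field F] [CharZero F] (g : Type*) [LieRing g] [LieAlgebra F g]
    [Module.Finite F g]
    (B : g →ₗ[F] g →ₗ[F] F)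
    (hsymm : ∀ x y : g, B x y = B y x)
    (hnondeg : ∀ x : g, (∀ y : g, B x y = 0) → x = 0)
    (hinv : ∀ x y z : g, B ⁅x, y⁆ z = B x ⁅y, z⁆)
    (hjab : ∀ x ∈ jIdeal F g, ∀ y ∈ jIdeal F g, ⁅x, y⁆ = 0) :
    (∀ x : g, ∀ y ∈ jIdeal F g, ⁅x, y⁆ ∈ iIdeal F g)
      ∧ (∀ x : g, (∀ w ∈ iIdeal F g, B x w = 0) ↔ x ∈ jIdeal F g) := by
  have hnd : LinearMap.BilinForm.Nondegenerate B :=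
    ⟨hnondeg, fun y h => hnondeg y fun x => by rw [hsymm]; exact h x⟩
  have hrefl : LinearMap.BilinForm.IsRefl B := fun x y h => by rw [hsymm]; exact h
  have hdcs : ∀ k, LinearMap.BilinForm.orthogonal B (ucs F g k) = dcs F g k := by
    intro k
    rw [ucs_eq_orth B hsymm hnd hrefl hinv k,
      LinearMap.BilinForm.orthogonal_orthogonal hnd hrefl]
  have horthi : LinearMap.BilinForm.orthogonal B (iIdeal F g) = jIdeal F g := by
    rw [iIdeal, orth_iSup, jIdeal]
    refine iInf_congr fun k => ?_
    rw [orth_iSup]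
    refine iInf_congr fun hk => ?_
    rw [orth_inf B hnd hrefl, hdcs, ← ucs_eq_orth B hsymm hnd hrefl hinv, sup_comm]
  have horthj : LinearMap.BilinForm.orthogonal B (jIdeal F g) = iIdeal F g := by
    rw [← horthi, LinearMap.BilinForm.orthogonal_orthogonal hnd hrefl]
  constructor
  · intro x y hy
    rw [← horthj, mem_orth B hsymm]
    intro w hw
    rw [hinv, hjab y hy w hw, map_zero]
  · intro x
    rw [← horthi, ← mem_orth B hsymm]
end

section
/- Suppose the bracket [·,·]_{λ,μ} on g = h ⊕ a ⊕ h* satisfies the Jacobi identity, and suppose the bilinear form B defined by B(x+u+α, y+v+β) = α(y) + β(x) + B_a(u,v) is invariant with respect to this bracket, i.e. B([p,q]_{λ,μ}, r) = B(p, [q,r]_{λ,μ}) for all p, q, r ∈ g. Then: (b1) μ is cyclic, i.e. μ(x,y)(z) = μ(y,z)(x) for all x, y, z ∈ h; and (b2) φ is determined by λ via φ(x)(v)(y) = −B_a(λ(x,y), v) for all x, y ∈ h and v ∈ a. -/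
section

variable {F : Type*} [Field F] {h a : Type*} [LieRing h] [LieAlgebra F h]
  [AddCommGroup a] [Module F a]

/-- The coadjoint action of `h` on `h*`: `ad*(x)(α) = −α ∘ ad(x)`. -/
def coad (x : h) (α : Module.Dual F h) : Module.Dual F h :=
  -(α ∘ₗ (LieAlgebra.ad F h x : h →ₗ[F] h))

/-- The skew-symmetric bracket `[·,·]_{λ,μ}` on `g = h × a × h*`:
`[x+u+α, y+v+β] = [x,y]_h + λ(x,y) + μ(x,y) + φ(x)(v) − φ(y)(u) + ad*(x)(β) − ad*(y)(α)`. -/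
def qBracket (lam : h → h → a) (mu : h → h → Module.Dual F h)
    (phi : h → a → Module.Dual F h) :
    (h × a × Module.Dual F h) → (h × a × Module.Dual F h) → (h × a × Module.Dual F h) :=
  fun p q =>
    (⁅p.1, q.1⁆,
     lam p.1 q.1,
     mu p.1 q.1 + phi p.1 q.2.1 - phi q.1 p.2.1 + coad p.1 q.2.2 - coad q.1 p.2.2)

/-- The candidate metric `B(x+u+α, y+v+β) = α(y) + β(x) + B_a(u,v)` on `h × a × h*`. -/
def qForm (Ba : a →ₗ[F] a →ₗ[F] F) :
    (h × a × Module.Dual F h) → (h × a × Module.Dual F h) → F :=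
  fun p q => p.2.2 q.1 + q.2.2 p.1 + Ba p.2.1 q.2.1

end

/-- if the bracket `[·,·]_{λ,μ}` satisfies the Jacobi identity and the form
`B` is invariant for it, then (b1) `μ` is cyclic and (b2) `φ` is determined by `λ` via
`φ(x)(v)(y) = −B_a(λ(x,y), v)`. -/
theorem stmt13 {F : Type*} [Field F] [CharZero F] {h a : Type*}
    [LieRing h] [LieAlgebra F h] [Module.Finite F h]
    [AddCommGroup a] [Module F a] [Module.Finite F a]
    (Ba : a →ₗ[F] a →ₗ[F] F)
    (hBasymm : ∀ u v : a, Ba u v = Ba v u)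
    (hBanondeg : ∀ u : a, (∀ v : a, Ba u v = 0) → u = 0)
    (lam : h →ₗ[F] h →ₗ[F] a) (hlam : ∀ x : h, lam x x = 0)
    (mu : h →ₗ[F] h →ₗ[F] Module.Dual F h) (hmu : ∀ x : h, mu x x = 0)
    (phi : h →ₗ[F] a →ₗ[F] Module.Dual F h)
    (hJac : ∀ p q r : h × a × Module.Dual F h,
        qBracket (fun x y => lam x y) (fun x y => mu x y) (fun x v => phi x v)
            (qBracket (fun x y => lam x y) (fun x y => mu x y) (fun x v => phi x v) p q) r
          + qBracket (fun x y => lam x y) (fun x y => mu x y) (fun x v => phi x v)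
            (qBracket (fun x y => lam x y) (fun x y => mu x y) (fun x v => phi x v) q r) p
          + qBracket (fun x y => lam x y) (fun x y => mu x y) (fun x v => phi x v)
            (qBracket (fun x y => lam x y) (fun x y => mu x y) (fun x v => phi x v) r p) q
          = 0)
    (hinv : ∀ p q r : h × a × Module.Dual F h,
        qForm Ba (qBracket (fun x y => lam x y) (fun x y => mu x y) (fun x v => phi x v) p q) r
          = qForm Ba p
              (qBracket (fun x y => lam x y) (fun x y => mu x y) (fun x v => phi x v) q r)) :
    (∀ x y z : h, mu x y z = mu y z x)
    ∧ (∀ (x y : h) (v : a), phi x v y = -(Ba (lam x y) v)) := by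
  have hlam' : ∀ x y : h, lam y x = -(lam x y) := by
    intro x y
    have := hlam (x + y)
    simp only [map_add, LinearMap.add_apply, hlam x, hlam y, zero_add, add_zero] at this
    exact eq_neg_of_add_eq_zero_left this
  constructor
  · intro x y z
    have := hinv (x, 0, 0) (y, 0, 0) (z, 0, 0)
    simpa [qBracket, qForm, coad] using this
  · intro x y v
    have h2 := hinv (y, (0 : a), (0 : Module.Dual F h)) (x, 0, 0) ((0 : h), v, 0)
    simp [qBracket, qForm, coad] at h2
    rw [← h2, hlam', map_neg, LinearMap.neg_apply]
end

section
/- Suppose the bracket [·,·]_{λ,μ} on g = h ⊕ a ⊕ h* satisfies the Jacobi identity. Assume: (b1) μ is cyclic, i.e. μ(x,y)(z) = μ(y,z)(x) for all x, y, z ∈ h; and (b2) there exists a linear map τ : h → a such that φ(x)(τ(y)) = φ(y)(τ(x)) for all x, y ∈ h (i.e. e_φ(τ) = 0) and φ(x)(v)(y) = −B_a(λ(x,y) − τ([x,y]_h), v) for all x, y ∈ h, v ∈ a. Then the Lie algebra (g, [·,·]_{λ,μ}) admits an invariant metric, i.e. there exists a nondegenerate symmetric bilinear form B' : g × g → F with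 B'([p,q]_{λ,μ}, r) = B'(p, [q,r]_{λ,μ}) for all p, q, r ∈ g. -/
/-- if the bracket `[·,·]_{λ,μ}` satisfies the Jacobi identity, `μ` is cyclic,
and `φ` is determined by `λ` up to the coboundary of a `τ ∈ ker e_φ`, then the Lie algebra
`(g, [·,·]_{λ,μ})` admits an invariant metric. -/
theorem stmt14 {F : Type*} [Field F] [CharZero F] {h a : Type*}
    [LieRing h] [LieAlgebra F h] [Module.Finite F h]
    [AddCommGroup a] [Module F a] [Module.Finite F a]
    (Ba : a →ₗ[F] a →ₗ[F] F)
    (hBasymm : ∀ u v : a, Ba u v = Ba v u)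
    (hBanondeg : ∀ u : a, (∀ v : a, Ba u v = 0) → u = 0)
    (lam : h →ₗ[F] h →ₗ[F] a) (hlam : ∀ x : h, lam x x = 0)
    (mu : h →ₗ[F] h →ₗ[F] Module.Dual F h) (hmu : ∀ x : h, mu x x = 0)
    (phi : h →ₗ[F] a →ₗ[F] Module.Dual F h)
    (hJac : ∀ p q r : h × a × Module.Dual F h,
        qBracket (fun x y => lam x y) (fun x y => mu x y) (fun x v => phi x v)
            (qBracket (fun x y => lam x y) (fun x y => mu x y) (fun x v => phi x v) p q) r
          + qBracket (fun x y => lam x y) (fun x y => mu x y) (fun x v => phi x v)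
            (qBracket (fun x y => lam x y) (fun x y => mu x y) (fun x v => phi x v) q r) p
          + qBracket (fun x y => lam x y) (fun x y => mu x y) (fun x v => phi x v)
            (qBracket (fun x y => lam x y) (fun x y => mu x y) (fun x v => phi x v) r p) q
          = 0)
    -- (b1) μ is cyclic
    (hb1 : ∀ x y z : h, mu x y z = mu y z x)
    -- (b2) there is τ ∈ ker e_φ with λ_φ = λ + dτ
    (τ : h →ₗ[F] a)
    (hτker : ∀ x y : h, phi x (τ y) = phi y (τ x))
    (hb2 : ∀ (x y : h) (v : a), phi x v y = -(Ba (lam x y - τ ⁅x, y⁆) v)) :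
    ∃ B' : (h × a × Module.Dual F h) →ₗ[F] (h × a × Module.Dual F h) →ₗ[F] F,
      (∀ p q : h × a × Module.Dual F h, B' p q = B' q p)
      ∧ (∀ p : h × a × Module.Dual F h, (∀ q, B' p q = 0) → p = 0)
      ∧ (∀ p q r : h × a × Module.Dual F h,
          B' (qBracket (fun x y => lam x y) (fun x y => mu x y) (fun x v => phi x v) p q) r
            = B' p
                (qBracket (fun x y => lam x y) (fun x y => mu x y)
                  (fun x v => phi x v) q r)) := by
    classical
  -- skew-symmetry of lam
  have hlam' : ∀ x y : h, lam x y = - lam y x := by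
    intro x y
    have h0 := hlam (x + y)
    simp only [map_add, LinearMap.add_apply, hlam, zero_add, add_zero] at h0
    exact eq_neg_of_add_eq_zero_right h0
  -- the key vanishing lemma: Ba (λ_φ x y) (τ z) = 0
  have hsym : ∀ x y z : h, Ba (lam x y - τ ⁅x, y⁆) (τ z) = Ba (lam z y - τ ⁅z, y⁆) (τ x) := by
    intro x y z
    have h1 := hb2 x y (τ z)
    have h2 := hb2 z y (τ x)
    have h3 := LinearMap.congr_fun (hτker x z) y
    linear_combination h1 - h2 - h3
  have hskew : ∀ x y z : h, Ba (lam x y - τ ⁅x, y⁆) (τ z)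
      = -Ba (lam y x - τ ⁅y, x⁆) (τ z) := by
    intro x y z
    have e : lam x y - τ ⁅x, y⁆ = -(lam y x - τ ⁅y, x⁆) := by
      rw [hlam' x y, ← lie_skew x y, map_neg]
      abel
    rw [e, map_neg, LinearMap.neg_apply]
  have hA : ∀ x y z : h, Ba (lam x y - τ ⁅x, y⁆) (τ z) = 0 := by
    intro x y z
    have chain : Ba (lam x y - τ ⁅x, y⁆) (τ z) = -Ba (lam x y - τ ⁅x, y⁆) (τ z) := by
      calc Ba (lam x y - τ ⁅x, y⁆) (τ z) = Ba (lam z y - τ ⁅z, y⁆) (τ x) := hsym x y z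
        _ = -Ba (lam y z - τ ⁅y, z⁆) (τ x) := hskew z y x
        _ = -Ba (lam x z - τ ⁅x, z⁆) (τ y) := by rw [hsym y z x]
        _ = Ba (lam z x - τ ⁅z, x⁆) (τ y) := by rw [hskew x z y]; ring
        _ = Ba (lam y x - τ ⁅y, x⁆) (τ z) := hsym z x y
        _ = -Ba (lam x y - τ ⁅x, y⁆) (τ z) := by rw [hskew x y z]; ring
    have h2 : (2 : F) * Ba (lam x y - τ ⁅x, y⁆) (τ z) = 0 := by linear_combination chain
    exact (mul_eq_zero.mp h2).resolve_left two_ne_zero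
  -- the metric
  refine ⟨LinearMap.mk₂ F
    (fun p q : h × a × Module.Dual F h =>
      p.2.2 q.1 + q.2.2 p.1 + Ba (p.2.1 - τ p.1) (q.2.1 - τ q.1))
    (by intro p p' q
        simp only [Prod.fst_add, Prod.snd_add, LinearMap.add_apply, map_add, map_sub,
          LinearMap.sub_apply]
        ring)
    (by intro c p q
        simp only [Prod.smul_fst, Prod.smul_snd, LinearMap.smul_apply, map_smul, map_sub,
          LinearMap.sub_apply, smul_eq_mul]
        ring)
    (by intro p q q'
        simp only [Prod.fst_add, Prod.snd_add, LinearMap.add_apply, map_add, map_sub,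
          LinearMap.sub_apply]
        ring)
    (by intro c p q
        simp only [Prod.smul_fst, Prod.smul_snd, LinearMap.smul_apply, map_smul, map_sub,
          LinearMap.sub_apply, smul_eq_mul]
        ring), ?_, ?_, ?_⟩
  · intro p q
    simp only [LinearMap.mk₂_apply]
    rw [hBasymm]
    ring
  · rintro ⟨x, u, α⟩ hp
    have hx : x = 0 := by
      rw [← Module.forall_dual_apply_eq_zero_iff F x]
      intro β
      have := hp (0, 0, β)
      simpa using this
    have hu : u = 0 := by
      subst hx
      refine hBanondeg u fun v => ?_
      have := hp (0, v, 0)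
      simpa using this
    have hα : α = 0 := by
      subst hx; subst hu
      ext y
      have := hp (y, 0, 0)
      simpa using this
    simp [hx, hu, hα]
  · rintro ⟨x, u, α⟩ ⟨y, v, β⟩ ⟨z, w, γ⟩
    have e1 : lam y x = -lam x y := hlam' y x
    have e2 : lam z x = -lam x z := hlam' z x
    have e3 : (⁅y, x⁆ : h) = -⁅x, y⁆ := (lie_skew y x).symm
    have e4 : (⁅z, x⁆ : h) = -⁅x, z⁆ := (lie_skew z x).symm
    have k1e : Ba (lam x y) (τ z) - Ba (τ ⁅x, y⁆) (τ z) = 0 := by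
      have := hA x y z
      simpa [map_sub, LinearMap.sub_apply] using this
    have k2e : Ba (lam y z) (τ x) - Ba (τ ⁅y, z⁆) (τ x) = 0 := by
      have := hA y z x
      simpa [map_sub, LinearMap.sub_apply] using this
    have b1 := hb1 x y z
    have s5r := hBasymm (lam y z) u
    have s6r := hBasymm (τ ⁅y, z⁆) u
    have s7r := hBasymm (τ x) (lam y z)
    have s8r := hBasymm (τ x) (τ ⁅y, z⁆)
    simp only [LinearMap.mk₂_apply, qBracket, coad, LinearMap.neg_apply, LinearMap.comp_apply,
      LinearMap.coe_comp, Function.comp_apply, LieHom.coe_toLinearMap, LieAlgebra.ad_apply,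
      LinearMap.add_apply, LinearMap.sub_apply, hb2, e1, e2, e3, e4, map_add, map_sub, map_neg,
      LinearMap.neg_apply]
    linear_combination b1 + s5r - s6r - k1e + s7r - s8r + k2e
end

section
/- Let F be a field of characteristic zero and r ≥ 3 an integer. Define an equivalence relation on the space of r×3 matrices over F by: λ ~ λ' if and only if there exist h ∈ GL_r(F), a 3×3 matrix g = [[g₁₁, g₁₂, 0], [g₂₁, g₂₂, 0], [g₃₁, g₃₂, g₃₃]] with g₃₃ = g₁₁g₂₂ − g₁₂g₂₁ ≠ 0 (the matrix of an automorphism of the 3-dimensional Heisenberg Lie algebra), and an r×3 matrix N whose first and second columns are zero, such that λ' = (det g)⁻¹ · h · λ · gᵀ + N. Then every r×3 matrix λ over F is equivalent to exactly one of the following three canonical forms: (i) the matrix whose top 3×3 block is the identity and whose remaining rows are zero; (ii) the matrix whose only nonzero entry is a 1 in position (1,1); (iii) the zero matrix. In particular, no two of these three canonical forms are equivalent to each other. -/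
open Matrix

/-- The matrix of an automorphism of the 3-dimensional Heisenberg Lie algebra:
`g = [[g₁₁, g₁₂, 0], [g₂₁, g₂₂, 0], [g₃₁, g₃₂, g₃₃]]` with
`g₃₃ = g₁₁g₂₂ − g₁₂g₂₁ ≠ 0`. -/
def heisAut {F : Type*} [Field F] (g : Matrix (Fin 3) (Fin 3) F) : Prop :=
  g 0 2 = 0 ∧ g 1 2 = 0 ∧ g 2 2 = g 0 0 * g 1 1 - g 0 1 * g 1 0 ∧ g 2 2 ≠ 0

/-- The equivalence relation on `r × 3` matrices:
`λ ~ λ'` iff `λ' = (det g)⁻¹ · h · λ · gᵀ + N` for some invertible `h`, Heisenberg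
automorphism matrix `g`, and matrix `N` whose first two columns vanish. -/
def lamRel {F : Type*} [Field F] {r : ℕ} (lam lam' : Matrix (Fin r) (Fin 3) F) : Prop :=
  ∃ (h : Matrix (Fin r) (Fin r) F) (g : Matrix (Fin 3) (Fin 3) F)
      (N : Matrix (Fin r) (Fin 3) F),
    IsUnit h ∧ heisAut g ∧ (∀ i : Fin r, N i 0 = 0 ∧ N i 1 = 0)
      ∧ lam' = (g.det)⁻¹ • (h * lam * gᵀ) + N

/-- Canonical form (i): top `3 × 3` block the identity, remaining rows zero. -/
def canOne (F : Type*) [Field F] (r : ℕ) : Matrix (Fin r) (Fin 3) F :=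
  fun i j => if (i : ℕ) = (j : ℕ) then 1 else 0

/-- Canonical form (ii): the only nonzero entry is a `1` in position `(1,1)`. -/
def canTwo (F : Type*) [Field F] (r : ℕ) : Matrix (Fin r) (Fin 3) F :=
  fun i j => if (i : ℕ) = 0 ∧ (j : ℕ) = 0 then 1 else 0


section Aux
variable {F : Type*} [Field F] {r : ℕ}

/-- first two columns vanish -/
def colZero (lam : Matrix (Fin r) (Fin 3) F) : Prop :=
  ∀ i, lam i 0 = 0 ∧ lam i 1 = 0

/-- first two columns linearly independent -/
def colInd (lam : Matrix (Fin r) (Fin 3) F) : Prop :=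
  ∀ a b : F, (∀ i, a * lam i 0 + b * lam i 1 = 0) → a = 0 ∧ b = 0

lemma exists_isUnit_mulVec_eq {n : ℕ} (hn : n ≤ r)
    (v : Fin n → (Fin r → F)) (hv : LinearIndependent F v) :
    ∃ h : Matrix (Fin r) (Fin r) F, IsUnit h ∧
      ∀ j : Fin n, h.mulVec (v j) = Pi.single (Fin.castLE hn j) 1 := by
  classical
  set S : Submodule F (Fin r → F) := Submodule.span F (Set.range v) with hS
  obtain ⟨T, hT⟩ := Submodule.exists_isCompl S
  have hrankS : Module.finrank F S = n := by
    rw [hS, finrank_span_eq_card hv, Fintype.card_fin]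
  have hrankT : Module.finrank F T = r - n := by
    have h1 := Submodule.finrank_add_eq_of_isCompl hT
    have h2 : Module.finrank F (Fin r → F) = r := by simp
    omega
  let bS : Module.Basis (Fin n) F S := Module.Basis.span hv
  let bT : Module.Basis (Fin (r - n)) F T := (Module.finBasis F T).reindex (finCongr hrankT)
  let e : (Fin n ⊕ Fin (r - n)) ≃ Fin r :=
    finSumFinEquiv.trans (finCongr (by omega))
  let B : Module.Basis (Fin r) F (Fin r → F) :=
    (((bS.prod bT).map (Submodule.prodEquivOfIsCompl S T hT)).reindex e)
  have hB : ∀ j : Fin n, B (Fin.castLE hn j) = v j := by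
    intro j
    have h1 : Fin.castLE hn j = e (Sum.inl j) := by
      simp [e, Fin.ext_iff]
    rw [h1]
    simp only [B, Module.Basis.reindex_apply, Equiv.symm_apply_apply, Module.Basis.map_apply]
    rw [Module.Basis.prod_apply]
    simp only [Submodule.coe_prodEquivOfIsCompl', bS, Sum.elim_inl, Function.comp_apply,
      LinearMap.coe_inl]
    simp [Module.Basis.span_apply hv j]
  let pb : Module.Basis (Fin r) F (Fin r → F) := Pi.basisFun F (Fin r)
  let M : Matrix (Fin r) (Fin r) F := pb.toMatrix B
  let M' : Matrix (Fin r) (Fin r) F := B.toMatrix pb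
  have hMM' : M * M' = 1 := Module.Basis.toMatrix_mul_toMatrix_flip pb B
  have hM'M : M' * M = 1 := Module.Basis.toMatrix_mul_toMatrix_flip B pb
  refine ⟨M', ⟨⟨M', M, hM'M, hMM'⟩, rfl⟩, fun j => ?_⟩
  have hcol : M.mulVec (Pi.single (Fin.castLE hn j) 1) = v j := by
    funext i
    rw [Matrix.mulVec_single]
    simp [M, Module.Basis.toMatrix_apply, pb, ← hB j]
  rw [← hcol, Matrix.mulVec_mulVec, hM'M, Matrix.one_mulVec]

lemma colZero_mul (H : Matrix (Fin r) (Fin r) F) (lam : Matrix (Fin r) (Fin 3) F)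
    (h : colZero lam) : colZero (H * lam) := by
  intro i
  constructor <;>
  · rw [Matrix.mul_apply]
    refine Finset.sum_eq_zero fun k _ => ?_
    first
      | rw [(h k).1, mul_zero]
      | rw [(h k).2, mul_zero]

lemma colInd_mul (H : Matrix (Fin r) (Fin r) F) (lam : Matrix (Fin r) (Fin 3) F)
    (h : colInd (H * lam)) : colInd lam := by
  intro a b hab
  refine h a b fun i => ?_
  simp only [Matrix.mul_apply]
  rw [Finset.mul_sum, Finset.mul_sum, ← Finset.sum_add_distrib]
  refine Finset.sum_eq_zero fun k _ => ?_
  linear_combination H i k * hab k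

lemma combo_invariants {M lam' : Matrix (Fin r) (Fin 3) F} {e f u v : F}
    (hD : e * v - f * u ≠ 0)
    (h0 : ∀ i, lam' i 0 = e * M i 0 + f * M i 1)
    (h1 : ∀ i, lam' i 1 = u * M i 0 + v * M i 1) :
    (colZero lam' ↔ colZero M) ∧ (colInd lam' ↔ colInd M) := by
  constructor
  · constructor
    · intro hz i
      have hA : e * M i 0 + f * M i 1 = 0 := by rw [← h0 i]; exact (hz i).1
      have hB : u * M i 0 + v * M i 1 = 0 := by rw [← h1 i]; exact (hz i).2
      constructor
      · have key : (e * v - f * u) * M i 0 = 0 := by linear_combination v * hA - f * hB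
        rcases mul_eq_zero.mp key with h | h
        · exact absurd h hD
        · exact h
      · have key : (e * v - f * u) * M i 1 = 0 := by linear_combination e * hB - u * hA
        rcases mul_eq_zero.mp key with h | h
        · exact absurd h hD
        · exact h
    · intro hz i
      refine ⟨?_, ?_⟩
      · rw [h0 i, (hz i).1, (hz i).2]; ring
      · rw [h1 i, (hz i).1, (hz i).2]; ring
  · constructor
    · -- colInd lam' → colInd M
      intro hI a b hab
      set α : F := (v * a - u * b) / (e * v - f * u) with hα
      set β : F := (e * b - f * a) / (e * v - f * u) with hβ
      have hαe : α * e + β * u = a := by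
        rw [hα, hβ, div_mul_eq_mul_div, div_mul_eq_mul_div, ← add_div, div_eq_iff hD]; ring
      have hβf : α * f + β * v = b := by
        rw [hα, hβ, div_mul_eq_mul_div, div_mul_eq_mul_div, ← add_div, div_eq_iff hD]; ring
      have hcomb : ∀ i, α * lam' i 0 + β * lam' i 1 = 0 := by
        intro i
        calc α * lam' i 0 + β * lam' i 1
            = (α * e + β * u) * M i 0 + (α * f + β * v) * M i 1 := by
              rw [h0 i, h1 i]; ring
          _ = a * M i 0 + b * M i 1 := by rw [hαe, hβf]
          _ = 0 := hab i
      obtain ⟨hα0, hβ0⟩ := hI α β hcomb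
      constructor
      · rw [← hαe, hα0, hβ0]; ring
      · rw [← hβf, hα0, hβ0]; ring
    · -- colInd M → colInd lam'
      intro hI a b hab
      have hc : ∀ i, (a * e + b * u) * M i 0 + (a * f + b * v) * M i 1 = 0 := by
        intro i
        have := hab i
        rw [h0 i, h1 i] at this
        linear_combination this
      obtain ⟨h1', h2'⟩ := hI _ _ hc
      constructor
      · have key : (e * v - f * u) * a = 0 := by
          linear_combination v * h1' - u * h2'
        rcases mul_eq_zero.mp key with h | h
        · exact absurd h hD
        · exact h
      · have key : (e * v - f * u) * b = 0 := by
          linear_combination e * h2' - f * h1'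
        rcases mul_eq_zero.mp key with h | h
        · exact absurd h hD
        · exact h

lemma lamRel_inv {lam lam' : Matrix (Fin r) (Fin 3) F} (hrel : lamRel lam lam') :
    (colZero lam ↔ colZero lam') ∧ (colInd lam ↔ colInd lam') := by
  obtain ⟨h, g, N, hh, ⟨h02, h12, h22eq, h22ne⟩, hN, heq⟩ := hrel
  have hdet : g.det = g 2 2 * g 2 2 := by
    rw [Matrix.det_fin_three, h02, h12, h22eq]; ring
  set c : F := (g.det)⁻¹ with hc
  have hcne : c ≠ 0 := by
    rw [hc]
    exact inv_ne_zero (by rw [hdet]; exact mul_ne_zero h22ne h22ne)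
  set H : Matrix (Fin r) (Fin r) F := c • h with hH
  have hHunit : IsUnit H := by
    rw [Matrix.isUnit_iff_isUnit_det, hH, Matrix.det_smul, Fintype.card_fin]
    exact (IsUnit.pow r (isUnit_iff_ne_zero.mpr hcne)).mul
      ((Matrix.isUnit_iff_isUnit_det h).mp hh)
  have hHlam : ∀ i j, (H * lam) i j = c * (h * lam) i j := by
    intro i j
    rw [hH, Matrix.smul_mul, Matrix.smul_apply, smul_eq_mul]
  have hcol0 : ∀ i, lam' i 0 = g 0 0 * (H * lam) i 0 + g 0 1 * (H * lam) i 1 := by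
    intro i
    have h' := congrFun (congrFun heq i) 0
    rw [Matrix.add_apply, Matrix.smul_apply, smul_eq_mul, (hN i).1, add_zero] at h'
    rw [h', Matrix.mul_apply, Fin.sum_univ_three]
    simp only [Matrix.transpose_apply, h02, hHlam, mul_zero, add_zero]
    ring
  have hcol1 : ∀ i, lam' i 1 = g 1 0 * (H * lam) i 0 + g 1 1 * (H * lam) i 1 := by
    intro i
    have h' := congrFun (congrFun heq i) 1
    rw [Matrix.add_apply, Matrix.smul_apply, smul_eq_mul, (hN i).2, add_zero] at h'
    rw [h', Matrix.mul_apply, Fin.sum_univ_three]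
    simp only [Matrix.transpose_apply, h12, hHlam, mul_zero, add_zero]
    ring
  have hD : g 0 0 * g 1 1 - g 0 1 * g 1 0 ≠ 0 := by rw [← h22eq]; exact h22ne
  obtain ⟨hz, hi⟩ := combo_invariants hD hcol0 hcol1
  obtain ⟨U, hU⟩ := hHunit
  have hUinv : (↑U⁻¹ : Matrix (Fin r) (Fin r) F) * (H * lam) = lam := by
    rw [← Matrix.mul_assoc, ← hU, Units.inv_mul, Matrix.one_mul]
  constructor
  · rw [hz]
    constructor
    · exact fun h' => colZero_mul H lam h'
    · intro h'
      have := colZero_mul (↑U⁻¹) (H * lam) h'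
      rwa [hUinv] at this
  · rw [hi]
    constructor
    · intro h'
      apply colInd_mul (↑U⁻¹) (H * lam)
      rwa [hUinv]
    · exact colInd_mul H lam

lemma lamRel_of (h : Matrix (Fin r) (Fin r) F) (g : Matrix (Fin 3) (Fin 3) F)
    (hh : IsUnit h) (hg : heisAut g) (lam lam' : Matrix (Fin r) (Fin 3) F)
    (h0 : ∀ i, lam' i 0 = (g.det)⁻¹ * (h * lam * gᵀ) i 0)
    (h1 : ∀ i, lam' i 1 = (g.det)⁻¹ * (h * lam * gᵀ) i 1) : lamRel lam lam' := by
  refine ⟨h, g, lam' - (g.det)⁻¹ • (h * lam * gᵀ), hh, hg, fun i => ⟨?_, ?_⟩, by abel⟩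
  · rw [Matrix.sub_apply, Matrix.smul_apply, smul_eq_mul, h0 i, sub_self]
  · rw [Matrix.sub_apply, Matrix.smul_apply, smul_eq_mul, h1 i, sub_self]

lemma colZero_zero : colZero (0 : Matrix (Fin r) (Fin 3) F) := by
  intro i; simp

lemma not_colZero_canOne (hr : 3 ≤ r) : ¬ colZero (canOne F r) := by
  intro h
  have := (h ⟨0, by omega⟩).1
  simp [canOne] at this

lemma not_colZero_canTwo (hr : 3 ≤ r) : ¬ colZero (canTwo F r) := by
  intro h
  have := (h ⟨0, by omega⟩).1
  simp [canTwo] at this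

lemma not_colInd_zero : ¬ colInd (0 : Matrix (Fin r) (Fin 3) F) := by
  intro h
  have := (h 1 0 (fun i => by simp)).1
  exact one_ne_zero this

lemma not_colInd_canTwo (hr : 3 ≤ r) : ¬ colInd (canTwo F r) := by
  intro h
  have := (h 0 1 (fun i => by simp [canTwo])).2
  exact one_ne_zero this

lemma colInd_canOne (hr : 3 ≤ r) : colInd (canOne F r) := by
  intro a b hab
  have h0 := hab ⟨0, by omega⟩
  have h1 := hab ⟨1, by omega⟩
  simp [canOne] at h0 h1
  exact ⟨h0, h1⟩

lemma heisAut_one : heisAut (1 : Matrix (Fin 3) (Fin 3) F) := by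
  refine ⟨?_, ?_, ?_, ?_⟩ <;> simp [Matrix.one_apply]

lemma rel_zero {lam : Matrix (Fin r) (Fin 3) F} (hz : colZero lam) :
    lamRel lam (0 : Matrix (Fin r) (Fin 3) F) := by
  refine lamRel_of 1 1 isUnit_one heisAut_one lam 0 (fun i => ?_) (fun i => ?_) <;>
    simp [Matrix.one_mul, Matrix.mul_one, (hz i).1, (hz i).2]

lemma rel_canOne (hr : 3 ≤ r) {lam : Matrix (Fin r) (Fin 3) F} (hi : colInd lam) :
    lamRel lam (canOne F r) := by
  set c₀ : Fin r → F := fun k => lam k 0 with hc₀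
  set c₁ : Fin r → F := fun k => lam k 1 with hc₁
  have hli : LinearIndependent F ![c₀, c₁] := by
    rw [LinearIndependent.pair_iff]
    intro s t hst
    refine hi s t fun i => ?_
    have := congrFun hst i
    simpa using this
  obtain ⟨h, hu, hcols⟩ := exists_isUnit_mulVec_eq (show 2 ≤ r by omega) ![c₀, c₁] hli
  have e0 : ∀ i, (h * lam) i 0 = (h.mulVec c₀) i := fun i => by
    simp [Matrix.mul_apply, Matrix.mulVec, dotProduct, hc₀]
  have e1 : ∀ i, (h * lam) i 1 = (h.mulVec c₁) i := fun i => by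
    simp [Matrix.mul_apply, Matrix.mulVec, dotProduct, hc₁]
  have hc0 := hcols 0
  have hc1 := hcols 1
  simp only [Matrix.cons_val_zero, Matrix.cons_val_one, Matrix.head_cons] at hc0 hc1
  refine lamRel_of h 1 hu heisAut_one lam (canOne F r) (fun i => ?_) (fun i => ?_)
  · rw [Matrix.det_one, inv_one, one_mul, Matrix.transpose_one, Matrix.mul_one,
      e0 i, hc0]
    simp [canOne, Pi.single_apply, Fin.ext_iff]
  · rw [Matrix.det_one, inv_one, one_mul, Matrix.transpose_one, Matrix.mul_one,
      e1 i, hc1]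
    simp [canOne, Pi.single_apply, Fin.ext_iff]

lemma rel_canTwo (hr : 3 ≤ r) {lam : Matrix (Fin r) (Fin 3) F}
    (hnz : ¬ colZero lam) (hni : ¬ colInd lam) : lamRel lam (canTwo F r) := by
  rw [colInd] at hni
  push_neg at hni
  obtain ⟨a, b, hab, hne⟩ := hni
  by_cases hc0 : ∀ i, lam i 0 = 0
  · -- first column zero, second column nonzero
    have hex : ∃ i0, lam i0 1 ≠ 0 := by
      by_contra hco
      push_neg at hco
      exact hnz fun i => ⟨hc0 i, hco i⟩
    obtain ⟨i0, hi0⟩ := hex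
    set c₁ : Fin r → F := fun k => lam k 1 with hc₁
    have hc₁ne : c₁ ≠ 0 := fun h => hi0 (by rw [hc₁] at h; exact congrFun h i0)
    have hli : LinearIndependent F (fun _ : Fin 1 => c₁) :=
      linearIndependent_unique_iff.mpr hc₁ne
    obtain ⟨h, hu, hcols⟩ := exists_isUnit_mulVec_eq (show 1 ≤ r by omega) _ hli
    have hcol := hcols 0
    set g : Matrix (Fin 3) (Fin 3) F := !![0, 1, 0; 1, 0, 0; 0, 0, -1] with hg
    have hgaut : heisAut g := by
      refine ⟨?_, ?_, ?_, ?_⟩ <;> simp [hg, heisAut]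
    have hdet : g.det = 1 := by
      rw [hg, Matrix.det_fin_three]; simp
    refine lamRel_of h g hu hgaut lam (canTwo F r) (fun i => ?_) (fun i => ?_)
    · rw [hdet, inv_one, one_mul, Matrix.mul_apply, Fin.sum_univ_three]
      simp only [Matrix.transpose_apply, hg]
      norm_num
      have : (h * lam) i 1 = (h.mulVec c₁) i := by
        simp [Matrix.mul_apply, Matrix.mulVec, dotProduct, hc₁]
      rw [this, hcol]
      simp [canTwo, Pi.single_apply, Fin.ext_iff]
    · rw [hdet, inv_one, one_mul, Matrix.mul_apply, Fin.sum_univ_three]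
      simp only [Matrix.transpose_apply, hg]
      norm_num
      have : (h * lam) i 0 = 0 := by
        rw [Matrix.mul_apply]
        exact Finset.sum_eq_zero fun k _ => by rw [hc0 k, mul_zero]
      rw [this]
      simp [canTwo]
  · -- first column nonzero
    push_neg at hc0
    obtain ⟨i0, hi0⟩ := hc0
    have hbne : b ≠ 0 := by
      intro hb
      have ha : a ≠ 0 := fun ha0 => hne ha0 hb
      apply hi0
      have h' := hab i0
      rw [hb, zero_mul, add_zero, mul_eq_zero] at h'
      exact h'.resolve_left ha
    set s : F := a / b with hs
    have hz1 : ∀ k, s * lam k 0 + lam k 1 = 0 := by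
      intro k
      rw [hs]
      field_simp
      linear_combination hab k
    set c₀ : Fin r → F := fun k => lam k 0 with hc₀
    have hc₀ne : c₀ ≠ 0 := fun h => hi0 (by rw [hc₀] at h; exact congrFun h i0)
    have hli : LinearIndependent F (fun _ : Fin 1 => c₀) :=
      linearIndependent_unique_iff.mpr hc₀ne
    obtain ⟨h, hu, hcols⟩ := exists_isUnit_mulVec_eq (show 1 ≤ r by omega) _ hli
    have hcol := hcols 0
    set g : Matrix (Fin 3) (Fin 3) F := !![1, 0, 0; s, 1, 0; 0, 0, 1] with hg
    have hgaut : heisAut g := by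
      refine ⟨?_, ?_, ?_, ?_⟩ <;> simp [hg, heisAut]
    have hdet : g.det = 1 := by
      rw [hg, Matrix.det_fin_three]; simp
    refine lamRel_of h g hu hgaut lam (canTwo F r) (fun i => ?_) (fun i => ?_)
    · rw [hdet, inv_one, one_mul, Matrix.mul_apply, Fin.sum_univ_three]
      simp only [Matrix.transpose_apply, hg]
      norm_num
      have : (h * lam) i 0 = (h.mulVec c₀) i := by
        simp [Matrix.mul_apply, Matrix.mulVec, dotProduct, hc₀]
      rw [this, hcol]
      simp [canTwo, Pi.single_apply, Fin.ext_iff]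
    · rw [hdet, inv_one, one_mul, Matrix.mul_apply, Fin.sum_univ_three]
      simp only [Matrix.transpose_apply, hg]
      norm_num
      have : (h * lam) i 0 * s + (h * lam) i 1 = 0 := by
        simp only [Matrix.mul_apply]
        rw [Finset.sum_mul, ← Finset.sum_add_distrib]
        exact Finset.sum_eq_zero fun k _ => by linear_combination h i k * hz1 k
      rw [show canTwo F r i 1 = 0 by simp [canTwo], show (![s, 1, 0] : Fin 3 → F) 2 = 0 from rfl]
      linear_combination -this

end Aux

/-- for `r ≥ 3`, every `r × 3` matrix over `F` is equivalent to exactly one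
of the three canonical forms (i), (ii), (iii) (the zero matrix). -/
theorem stmt18 {F : Type*} [Field F] [CharZero F] {r : ℕ} (hr : 3 ≤ r)
    (lam : Matrix (Fin r) (Fin 3) F) :
    (lamRel lam (canOne F r) ∧ ¬lamRel lam (canTwo F r) ∧ ¬lamRel lam 0)
    ∨ (¬lamRel lam (canOne F r) ∧ lamRel lam (canTwo F r) ∧ ¬lamRel lam 0)
    ∨ (¬lamRel lam (canOne F r) ∧ ¬lamRel lam (canTwo F r) ∧ lamRel lam 0) := by
  by_cases hz : colZero lam
  · right; right
    refine ⟨?_, ?_, rel_zero hz⟩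
    · intro hrel
      exact not_colZero_canOne hr ((lamRel_inv hrel).1.mp hz)
    · intro hrel
      exact not_colZero_canTwo hr ((lamRel_inv hrel).1.mp hz)
  · by_cases hi : colInd lam
    · left
      refine ⟨rel_canOne hr hi, ?_, ?_⟩
      · intro hrel
        exact not_colInd_canTwo hr ((lamRel_inv hrel).2.mp hi)
      · intro hrel
        exact not_colInd_zero ((lamRel_inv hrel).2.mp hi)
    · right; left
      refine ⟨?_, rel_canTwo hr hz hi, ?_⟩
      · intro hrel
        exact hi ((lamRel_inv hrel).2.mpr (colInd_canOne hr))
      · intro hrel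
        exact hz ((lamRel_inv hrel).1.mpr colZero_zero)
end
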